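/- For λ ≠ 0, the elementary Desboves map has empty indeterminacy locus: if x,y,z ∈ ℂ are not all zero and λ ≠ 0, then the three values −x(x³+2z³), y(z³−x³+λ(x³+y³+z³)), z(2x³+z³) are not all zero. -/
import Mathlib

/-- For λ ≠ 0, the elementary Desboves map has empty indeterminacy locus. -/
theorem desboves_no_indeterminacy (lam x y z : ℂ) (hlam : lam ≠ 0)
    (hxyz : ¬ (x = 0 ∧ y = 0 ∧ z = 0)) :
    ¬ (-x*(x^3 + 2*z^3) = 0 ∧ y*(z^3 - x^3 + lam*(x^3 + y^3 + z^3)) = 0 ∧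
       z*(2*x^3 + z^3) = 0) := by
  rintro ⟨h1, h2, h3⟩
  have hx : x = 0 := by
    by_contra hx
    have hf1 : x^3 + 2*z^3 = 0 := by
      rcases mul_eq_zero.mp h1 with h | h
      · exact absurd (neg_eq_zero.mp h) hx
      · exact h
    have hz : z ≠ 0 := by
      intro hz
      apply hx
      have : x^3 = 0 := by rw [hz] at hf1; ring_nf at hf1 ⊢; linear_combination hf1
      exact pow_eq_zero_iff (by norm_num) |>.mp this
    have hf3 : 2*x^3 + z^3 = 0 := by
      rcases mul_eq_zero.mp h3 with h | h
      · exact absurd h hz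
      · exact h
    have : x^3 = 0 := by linear_combination (hf1 - 2*hf3)/(-3)
    exact hx (pow_eq_zero_iff (by norm_num) |>.mp this)
  have hz : z = 0 := by
    have : z * z^3 = 0 := by rw [hx] at h3; linear_combination h3
    rcases mul_eq_zero.mp this with h | h
    · exact h
    · exact pow_eq_zero_iff (by norm_num) |>.mp h
  have hy : y ≠ 0 := fun hy => hxyz ⟨hx, hy, hz⟩
  rw [hx, hz] at h2
  have : lam * y^4 = 0 := by linear_combination h2
  rcases mul_eq_zero.mp this with h | h
  · exact hlam h
  · exact hy (pow_eq_zero_iff (by norm_num) |>.mp h)
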